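/- Let 0 < q < 1, let l be an integer, let P be a nonzero Laurent polynomial with complex coefficients whose distinct nonzero roots are α_1, …, α_k with multiplicities m_1, …, m_k, and let T : ℂ[z,z⁻¹] → ℂ be ℂ-linear and satisfy T(P(qz)R(qz)) = T(z^l P(q^{−1}z)R(q^{−1}z)) for every Laurent polynomial R. Define w ∈ V by w_m = T(z^{−m}). Then there exist complex numbers r_{i,j} (j = 1, …, k, i = 0, …, m_j − 1) such that w(q^{−1}z) − q^l (z^l · w(qz)) = ∑_{i,j} r_{i,j} f_{i,j} in V. -/

import Mathlib

open LaurentPolynomial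

/-- Multiplication of a doubly infinite formal series `w : ℤ → ℂ` by a Laurent
polynomial `P`, defined coefficientwise: `(P·w)_m = ∑_j P_j w_{m-j}`. -/
noncomputable def laurentMul (P : LaurentPolynomial ℂ) : (ℤ → ℂ) →ₗ[ℂ] (ℤ → ℂ) where
  toFun w m := ∑ j ∈ P.coeff.support, P.coeff j * w (m - j)
  map_add' u v := by
    funext m
    simp [mul_add, Finset.sum_add_distrib]
  map_smul' c w := by
    funext m
    simp only [Pi.smul_apply, smul_eq_mul, RingHom.id_apply, Finset.mul_sum]
    exact Finset.sum_congr rfl fun j _ => by ring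

/-- The Laurent polynomial `P(sz)` obtained from `P` by substituting `z ↦ sz`. -/
noncomputable def lscale (s : ℂ) (P : LaurentPolynomial ℂ) : LaurentPolynomial ℂ :=
  ∑ j ∈ P.coeff.support, C (P.coeff j * s ^ j) * T j

/-- The series `w(sz)`, whose `m`-th coefficient is `s^m wₘ`. -/
noncomputable def vscale (s : ℂ) (w : ℤ → ℂ) : ℤ → ℂ :=
  fun m => s ^ m * w m

/-- The doubly infinite series `f_{i,α} = ∑_{l ∈ ℤ} l(l-1)⋯(l-i+1) α^{-l} z^l`,
whose `l`-th coefficient is the falling factorial with `i` factors times `α^{-l}`. -/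
noncomputable def fSeries (i : ℕ) (α : ℂ) : ℤ → ℂ :=
  fun l => (∏ t ∈ Finset.range i, ((l : ℂ) - t)) * α ^ (-l)

/-! Put `u = w(q⁻¹z) - q^l z^l w(qz)`. Since `tr Q = (Q·w)₀` and `(Q·v)(sz) = Q(sz)·v(sz)`,
the invariance of `tr` says `((P R)·u)₀ = 0` for every `R`; with `R = z^{-n}` this is
`(P·u)ₙ = 0`. As `z^d` and `c` are units, `u` is then killed by `∏ⱼ (S - αⱼ)^{mⱼ}`, where `S` is
multiplication by `z`. For pairwise coprime factors this kernel is the sum of the kernels of the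
factors, and `ker (S - α)^m` is spanned by `f_{0,α}, …, f_{m-1,α}`: `ker (S - α)` consists of
the multiples of `f_{0,α} = α^{-n}`, and `S - α` maps the span of the first `m + 1` series onto
the span of the first `m`, because `(S - α) f_{i+1,α} = -(i + 1) S f_{i,α}`. -/

open Function
open Polynomial (aeval toLaurent)

theorem laurentMul_apply (P : LaurentPolynomial ℂ) (u : ℤ → ℂ) (m : ℤ) :
    laurentMul P u m = P.coeff.sum fun j a => a * u (m - j) := rfl

theorem laurentMul_single (j : ℤ) (a : ℂ) (u : ℤ → ℂ) :
    laurentMul (AddMonoidAlgebra.single j a) u = fun m => a * u (m - j) := by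
  funext m
  rw [laurentMul_apply, AddMonoidAlgebra.coeff_single, Finsupp.sum_single_index (by simp)]

theorem laurentMul_T (n : ℤ) (u : ℤ → ℂ) : laurentMul (T n) u = fun m => u (m - n) := by
  simpa using laurentMul_single n 1 u

theorem laurentMul_zero : laurentMul 0 = 0 := by
  ext u m
  simp [laurentMul_apply]

theorem laurentMul_add (P Q : LaurentPolynomial ℂ) :
    laurentMul (P + Q) = laurentMul P + laurentMul Q := by
  ext u m
  simp only [LinearMap.add_apply, Pi.add_apply, laurentMul_apply, AddMonoidAlgebra.coeff_add]
  exact Finsupp.sum_add_index' (by simp) fun _ _ _ => add_mul _ _ _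

theorem laurentMul_mul (P Q : LaurentPolynomial ℂ) :
    laurentMul (P * Q) = laurentMul P * laurentMul Q := by
  induction P using AddMonoidAlgebra.induction_linear with
  | zero => simp [laurentMul_zero]
  | add P P' hP hP' => simp only [add_mul, laurentMul_add, hP, hP']
  | single j a =>
    induction Q using AddMonoidAlgebra.induction_linear with
    | zero => simp [laurentMul_zero]
    | add Q Q' hQ hQ' => simp only [mul_add, laurentMul_add, hQ, hQ']
    | single j' b =>
      ext u m
      simp only [AddMonoidAlgebra.single_mul_single, Module.End.mul_apply, laurentMul_single,
        sub_sub, mul_assoc]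

noncomputable def laurentMulAlgHom : LaurentPolynomial ℂ →ₐ[ℂ] Module.End ℂ (ℤ → ℂ) where
  toFun := laurentMul
  map_one' := by ext u m; simpa using congrFun (laurentMul_T 0 u) m
  map_mul' := laurentMul_mul
  map_zero' := laurentMul_zero
  map_add' := laurentMul_add
  commutes' a := by
    ext u m
    rw [← C_eq_algebraMap, ← single_eq_C, laurentMul_single]
    simp

theorem laurentMul_toLaurent (p : Polynomial ℂ) :
    laurentMul (toLaurent p) = aeval (laurentMul (T 1)) p := by
  have h : laurentMulAlgHom.comp Polynomial.toLaurentAlg = aeval (laurentMul (T 1)) :=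
    Polynomial.algHom_ext (by simp [laurentMulAlgHom])
  exact congrArg (· p) h

theorem laurentMul_eq_zero_of_dvd {P Q : LaurentPolynomial ℂ} (hPQ : P ∣ Q) {u : ℤ → ℂ}
    (hu : laurentMul P u = 0) : laurentMul Q u = 0 := by
  obtain ⟨A, rfl⟩ := hPQ
  rw [mul_comm, laurentMul_mul, Module.End.mul_apply, hu, map_zero]

theorem lscale_zero (s : ℂ) : lscale s 0 = 0 := by
  simp [lscale]

theorem lscale_eq_sum (s : ℂ) (Q : LaurentPolynomial ℂ) :
    lscale s Q = Q.coeff.sum fun j a => C (a * s ^ j) * T j := rfl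

theorem lscale_single (s : ℂ) (j : ℤ) (a : ℂ) :
    lscale s (AddMonoidAlgebra.single j a) = AddMonoidAlgebra.single j (a * s ^ j) := by
  rw [lscale_eq_sum, AddMonoidAlgebra.coeff_single, Finsupp.sum_single_index (by simp),
    single_eq_C_mul_T]

theorem lscale_add (s : ℂ) (P Q : LaurentPolynomial ℂ) :
    lscale s (P + Q) = lscale s P + lscale s Q := by
  simp only [lscale_eq_sum, AddMonoidAlgebra.coeff_add]
  exact Finsupp.sum_add_index' (by simp) fun _ _ _ => by rw [add_mul, map_add, add_mul]

theorem laurentMul_lscale {s : ℂ} (hs : s ≠ 0) (Q : LaurentPolynomial ℂ) (v : ℤ → ℂ) :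
    laurentMul (lscale s Q) v = vscale s (laurentMul Q (vscale s⁻¹ v)) := by
  induction Q using AddMonoidAlgebra.induction_linear with
  | zero => funext m; simp [lscale_zero, laurentMul_zero, vscale]
  | add P Q hP hQ =>
    funext m
    simp only [lscale_add, laurentMul_add, LinearMap.add_apply, Pi.add_apply, hP, hQ, vscale,
      mul_add]
  | single j a =>
    funext m
    simp only [lscale_single, laurentMul_single, vscale, inv_zpow', zpow_neg]
    rw [zpow_sub₀ hs]
    field_simp

theorem vscale_laurentMul_T {s : ℂ} (hs : s ≠ 0) (l : ℤ) (v : ℤ → ℂ) :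
    vscale s (laurentMul (T l) v) = s ^ l • laurentMul (T l) (vscale s v) := by
  funext m
  simp only [vscale, laurentMul_T, Pi.smul_apply, smul_eq_mul, ← mul_assoc, ← zpow_add₀ hs,
    add_sub_cancel]

theorem trace_eq_laurentMul_apply_zero (tr : LaurentPolynomial ℂ →ₗ[ℂ] ℂ) {w : ℤ → ℂ}
    (hw : ∀ m, w m = tr (T (-m))) (Q : LaurentPolynomial ℂ) : tr Q = laurentMul Q w 0 := by
  induction Q using AddMonoidAlgebra.induction_linear with
  | zero => simp [laurentMul_zero]
  | add P Q hP hQ => simp [laurentMul_add, hP, hQ]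
  | single j a =>
    have : (AddMonoidAlgebra.single j a : LaurentPolynomial ℂ) = a • T j := by
      rw [T, AddMonoidAlgebra.smul_single, smul_eq_mul, mul_one]
    simp only [laurentMul_single]
    rw [this, map_smul, smul_eq_mul, hw, zero_sub, neg_neg]

theorem laurentMul_eq_zero_of_trace_invariant {s : ℂ} (hs : s ≠ 0) (l : ℤ)
    (P : LaurentPolynomial ℂ) (tr : LaurentPolynomial ℂ →ₗ[ℂ] ℂ)
    (htr : ∀ R, tr (lscale s (P * R)) = tr (T l * lscale s⁻¹ (P * R)))
    {w : ℤ → ℂ} (hw : ∀ m, w m = tr (T (-m))) :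
    laurentMul P (vscale s⁻¹ w - s ^ l • laurentMul (T l) (vscale s w)) = 0 := by
  have key : ∀ Q, tr (lscale s Q) - tr (T l * lscale s⁻¹ Q)
      = laurentMul Q (vscale s⁻¹ w - s ^ l • laurentMul (T l) (vscale s w)) 0 := by
    intro Q
    rw [trace_eq_laurentMul_apply_zero tr hw, trace_eq_laurentMul_apply_zero tr hw, mul_comm,
      laurentMul_mul, Module.End.mul_apply, laurentMul_lscale hs,
      laurentMul_lscale (inv_ne_zero hs), inv_inv, vscale_laurentMul_T hs, map_sub]
    simp [vscale]
  funext n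
  have h := key (P * T (-n))
  rw [htr, sub_self, mul_comm, laurentMul_mul, Module.End.mul_apply, laurentMul_T] at h
  simpa only [zero_sub, neg_neg, Pi.zero_apply] using h.symm

theorem Module.End.ker_pow_le_of_le_map {R M : Type*} [Ring R] [AddCommGroup M] [Module R M]
    (L : Module.End R M) (W : ℕ → Submodule R M) (hker : ∀ n, LinearMap.ker L ≤ W (n + 1))
    (hmap : ∀ n, W n ≤ (W (n + 1)).map L) (n : ℕ) : LinearMap.ker (L ^ n) ≤ W n := by
  induction n with
  | zero => simp [Module.End.one_eq_id]
  | succ n ih =>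
    intro u hu
    have hLu : L u ∈ LinearMap.ker (L ^ n) := by
      rwa [LinearMap.mem_ker, ← Module.End.mul_apply, ← pow_succ]
    obtain ⟨v, hv, hLv⟩ := hmap n (ih hLu)
    have huv : u - v ∈ LinearMap.ker L := by simp [hLv]
    simpa using (W (n + 1)).add_mem hv (hker n huv)

theorem Polynomial.iSup_ker_aeval_eq_ker_aeval_prod {R M ι : Type*} [CommRing R] [AddCommGroup M]
    [Module R M] (f : Module.End R M) {p : ι → Polynomial R} (hp : Pairwise (IsCoprime on p))
    (s : Finset ι) :
    ⨆ i ∈ s, LinearMap.ker (aeval f (p i)) = LinearMap.ker (aeval f (∏ i ∈ s, p i)) := by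
  classical
  induction s using Finset.induction_on with
  | empty => simp [Module.End.one_eq_id]
  | insert a s ha ih =>
    rw [Finset.iSup_insert, ih, Finset.prod_insert ha,
      Polynomial.sup_ker_aeval_eq_ker_aeval_mul_of_coprime]
    exact IsCoprime.prod_right fun i hi => hp (ne_of_mem_of_not_mem hi ha).symm

theorem descPochhammer_succ_eval_sub_one {R : Type*} [CommRing R] (i : ℕ) (x : R) :
    (descPochhammer R (i + 1)).eval (x - 1)
      = (descPochhammer R (i + 1)).eval x - (i + 1) * (descPochhammer R i).eval (x - 1) := by
  simpa using congrArg (Polynomial.eval x) (descPochhammer_succ_comp_X_sub_one R i)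

theorem fSeries_apply (i : ℕ) (α : ℂ) (n : ℤ) :
    fSeries i α n = (descPochhammer ℂ i).eval (n : ℂ) * α ^ (-n) := by
  rw [fSeries, descPochhammer_eval_eq_prod_range]

theorem laurentMul_T_one_apply (u : ℤ → ℂ) (n : ℤ) : laurentMul (T 1) u n = u (n - 1) := by
  rw [laurentMul_T]

section fSeries

variable {α : ℂ} (hα : α ≠ 0)
include hα

theorem laurentMul_T_one_fSeries_succ_sub (i : ℕ) :
    laurentMul (T 1) (fSeries (i + 1) α) - α • fSeries (i + 1) α
      = -((i : ℂ) + 1) • laurentMul (T 1) (fSeries i α) := by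
  funext n
  simp only [Pi.sub_apply, Pi.smul_apply, smul_eq_mul, laurentMul_T_one_apply, fSeries_apply]
  push_cast
  rw [descPochhammer_succ_eval_sub_one, show -(n - 1) = -n + 1 by ring, zpow_add_one₀ hα]
  ring

theorem eq_smul_fSeries_zero_of_shift {u : ℤ → ℂ} (hu : ∀ n, u (n - 1) = α * u n) :
    u = u 0 • fSeries 0 α := by
  funext n
  simp only [Pi.smul_apply, smul_eq_mul, fSeries_apply, descPochhammer_zero, Polynomial.eval_one,
    one_mul]
  induction n using Int.induction_on with
  | zero => simp
  | succ n ih =>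
    have h := hu (n + 1)
    rw [add_sub_cancel_right, ih] at h
    rw [neg_add, zpow_add₀ hα, zpow_neg_one]
    field_simp
    linear_combination -h
  | pred n ih =>
    rw [hu, ih, neg_neg, neg_sub, sub_neg_eq_add, add_comm, zpow_add_one₀ hα]
    ring

theorem ker_aeval_shift_X_sub_C_pow_le (n : ℕ) :
    LinearMap.ker (aeval (laurentMul (T 1)) ((Polynomial.X - Polynomial.C α) ^ n))
      ≤ Submodule.span ℂ (Set.range fun i : Fin n => fSeries i α) := by
  rw [map_pow]
  set L := aeval (laurentMul (T 1)) (Polynomial.X - Polynomial.C α)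
  have hL : ∀ v, L v = laurentMul (T 1) v - α • v := fun v => by simp [L]
  refine Module.End.ker_pow_le_of_le_map L
    (fun k => Submodule.span ℂ (Set.range fun i : Fin k => fSeries i α)) (fun k u hu => ?_)
    (fun k => ?_) n
  · have hshift : ∀ n, u (n - 1) = α * u n := fun n => by
      simpa [hL, sub_eq_zero, laurentMul_T_one_apply] using congrFun hu n
    rw [eq_smul_fSeries_zero_of_shift hα hshift]
    exact Submodule.smul_mem _ _ (Submodule.subset_span ⟨⟨0, k.succ_pos⟩, rfl⟩)
  · rw [Submodule.span_le]
    rintro _ ⟨i, rfl⟩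
    have hi : (i : ℂ) + 1 ≠ 0 := by exact_mod_cast (i : ℕ).succ_ne_zero
    refine ⟨α⁻¹ • (-((i : ℂ) + 1)⁻¹ • fSeries (i + 1) α - fSeries i α), ?_, ?_⟩
    · have hmem : ∀ j (hj : j < k + 1), fSeries j α ∈ Submodule.span ℂ
          (Set.range fun i : Fin (k + 1) => fSeries i α) :=
        fun j hj => Submodule.subset_span ⟨⟨j, hj⟩, rfl⟩
      exact Submodule.smul_mem _ _ (Submodule.sub_mem _ (Submodule.smul_mem _ _
        (hmem _ (by omega))) (hmem _ (by omega)))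
    · rw [map_smul, map_sub, map_smul, hL, hL, laurentMul_T_one_fSeries_succ_sub hα, smul_smul,
        neg_mul_neg, inv_mul_cancel₀ hi, one_smul, sub_sub_cancel, smul_smul, inv_mul_cancel₀ hα,
        one_smul]

end fSeries

theorem ker_aeval_shift_prod_le_span {ι : Type*} [Fintype ι] {α : ι → ℂ} (hα0 : ∀ j, α j ≠ 0)
    (hαinj : Function.Injective α) (m : ι → ℕ) :
    LinearMap.ker (aeval (laurentMul (T 1))
        (∏ j, (Polynomial.X - Polynomial.C (α j)) ^ m j))
      ≤ Submodule.span ℂ (Set.range fun p : Σ j, Fin (m j) => fSeries p.2 (α p.1)) := by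
  have hcop : Pairwise (IsCoprime on fun j => (Polynomial.X - Polynomial.C (α j)) ^ m j) :=
    fun i j hij => (Polynomial.pairwise_coprime_X_sub_C hαinj hij).pow
  rw [← Polynomial.iSup_ker_aeval_eq_ker_aeval_prod _ hcop, Set.range_sigma_eq_iUnion_range,
    ← Submodule.iSup_span]
  exact iSup₂_le fun j _ =>
    (ker_aeval_shift_X_sub_C_pow_le (hα0 j) (m j)).trans (le_iSup_of_le j le_rfl)

theorem trace_series_diff_in_span_general (q : ℝ) (hq0 : 0 < q)
    (l : ℤ) (P : LaurentPolynomial ℂ)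
    (k : ℕ) (α : Fin k → ℂ) (m : Fin k → ℕ) (c : ℂ) (d : ℤ)
    (hc : c ≠ 0) (hα0 : ∀ j, α j ≠ 0) (hαinj : Function.Injective α)
    (hPfac : P = T d * Polynomial.toLaurent
      (Polynomial.C c * ∏ j, (Polynomial.X - Polynomial.C (α j)) ^ m j))
    (tr : LaurentPolynomial ℂ →ₗ[ℂ] ℂ)
    (htr : ∀ R : LaurentPolynomial ℂ,
      tr (lscale (q : ℂ) (P * R)) = tr (T l * lscale ((q : ℂ)⁻¹) (P * R)))
    (w : ℤ → ℂ) (hw : ∀ m : ℤ, w m = tr (T (-m))) :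
    ∃ r : (Σ j : Fin k, Fin (m j)) → ℂ,
      vscale ((q : ℂ)⁻¹) w - ((q : ℂ) ^ l) • laurentMul (T l) (vscale (q : ℂ) w)
        = ∑ p : Σ j : Fin k, Fin (m j), r p • fSeries p.2.val (α p.1) := by
  have hq : (q : ℂ) ≠ 0 := Complex.ofReal_ne_zero.mpr hq0.ne'
  have hPu := laurentMul_eq_zero_of_trace_invariant hq l P tr htr hw
  have hdvd : P ∣ toLaurent (∏ j, (Polynomial.X - Polynomial.C (α j)) ^ m j) := by
    rw [hPfac, map_mul, Polynomial.toLaurent_C, ← mul_assoc,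
      ((isUnit_T d).mul ((isUnit_iff_ne_zero.mpr hc).map C)).mul_left_dvd]
  have hker := laurentMul_eq_zero_of_dvd hdvd hPu
  rw [laurentMul_toLaurent] at hker
  obtain ⟨r, hr⟩ := (Submodule.mem_span_range_iff_exists_fun ℂ).mp
    (ker_aeval_shift_prod_le_span hα0 hαinj m hker)
  exact ⟨r, hr.symm⟩

/-- let `0 < q < 1`, `l ∈ ℤ`, and let `P` be a nonzero Laurent
polynomial with distinct nonzero roots `α_1, …, α_k` of multiplicities
`m_1, …, m_k` (i.e. `P = z^d · c · ∏_j (z - α_j)^{m_j}`, `c ≠ 0`). Let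
`tr : ℂ[z,z⁻¹] → ℂ` be linear with `tr(P(qz)R(qz)) = tr(z^l P(q⁻¹z)R(q⁻¹z))`
for all `R`, and define `wₘ = tr(z^{-m})`. Then there are complex numbers
`r_{i,j}` with `w(q⁻¹z) - q^l (z^l·w(qz)) = ∑_{i,j} r_{i,j} f_{i,j}` in `V`. -/
theorem trace_series_diff_in_span (q : ℝ) (hq0 : 0 < q) (hq1 : q < 1)
    (l : ℤ) (P : LaurentPolynomial ℂ) (hP : P ≠ 0)
    (k : ℕ) (α : Fin k → ℂ) (m : Fin k → ℕ) (c : ℂ) (d : ℤ)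
    (hc : c ≠ 0) (hα0 : ∀ j, α j ≠ 0) (hαinj : Function.Injective α)
    (hm : ∀ j, 0 < m j)
    (hPfac : P = T d * Polynomial.toLaurent
      (Polynomial.C c * ∏ j, (Polynomial.X - Polynomial.C (α j)) ^ m j))
    (tr : LaurentPolynomial ℂ →ₗ[ℂ] ℂ)
    (htr : ∀ R : LaurentPolynomial ℂ,
      tr (lscale (q : ℂ) (P * R)) = tr (T l * lscale ((q : ℂ)⁻¹) (P * R)))
    (w : ℤ → ℂ) (hw : ∀ m : ℤ, w m = tr (T (-m))) :
    ∃ r : (Σ j : Fin k, Fin (m j)) → ℂ,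
      vscale ((q : ℂ)⁻¹) w - ((q : ℂ) ^ l) • laurentMul (T l) (vscale (q : ℂ) w)
        = ∑ p : Σ j : Fin k, Fin (m j), r p • fSeries p.2.val (α p.1) :=
  trace_series_diff_in_span_general q hq0 l P k α m c d hc hα0 hαinj hPfac tr htr w hw
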